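/- The double integral (1/2)·∫₀^{π/2} (1/sin α)·(∫₀^α dβ/cos β) dα equals π²/8. -/

import Mathlib

/-!
With `t = tan (α / 2)` the inner integral is
`log (1 + t) - log (1 - t) = ∑ 2 t ^ (2k+1) / (2k+1)` and `dα / sin α = dt / t`,
so the double integral is
`∑ 2 / (2k+1) * ∫₀¹ t ^ (2k) dt = 2 ∑ 1 / (2k+1)² = π² / 4`.
All terms are nonnegative, which justifies integrating termwise.
-/

open Real Set MeasureTheory

theorem hasSum_one_div_odd_sq :
    HasSum (fun k : ℕ => 1 / (2 * k + 1 : ℝ) ^ 2) (π ^ 2 / 8) := by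
  have hodd : Summable fun k : ℕ => 1 / ((2 * k + 1 : ℕ) : ℝ) ^ 2 :=
    hasSum_zeta_two.summable.comp_injective fun m n h => by omega
  have heven : HasSum (fun k : ℕ => 1 / ((2 * k : ℕ) : ℝ) ^ 2) (π ^ 2 / 24) := by
    have h_eq : (fun k : ℕ => 1 / ((2 * k : ℕ) : ℝ) ^ 2) =
        fun k : ℕ => 1 / 4 * (1 / (k : ℝ) ^ 2) := by
      ext k; push_cast; ring
    rw [h_eq, show π ^ 2 / 24 = 1 / 4 * (π ^ 2 / 6) by ring]
    exact hasSum_zeta_two.mul_left _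
  obtain ⟨b, hb⟩ := hodd
  have hsum : HasSum (fun n : ℕ => 1 / (n : ℝ) ^ 2) (π ^ 2 / 24 + b) :=
    HasSum.even_add_odd heven hb
  obtain rfl : b = π ^ 2 / 8 := by linarith [hsum.unique hasSum_zeta_two]
  simpa using hb

theorem intervalIntegral.hasSum_integral_of_nonneg {μ : Measure ℝ} {f : ℕ → ℝ → ℝ}
    {a b : ℝ} (hab : a ≤ b) (hf : ∀ k, IntervalIntegrable (f k) μ a b)
    (hf_nonneg : ∀ k, ∀ x ∈ Ioc a b, 0 ≤ f k x)
    (hf_sum : Summable fun k => ∫ x in a..b, f k x ∂μ) :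
    HasSum (fun k => ∫ x in a..b, f k x ∂μ) (∫ x in a..b, ∑' k, f k x ∂μ) := by
  simp only [intervalIntegral.integral_of_le hab] at hf_sum ⊢
  refine hasSum_integral_of_summable_integral_norm (fun k => (hf k).1) ?_
  refine hf_sum.congr fun k => setIntegral_congr_fun measurableSet_Ioc fun x hx => ?_
  exact (Real.norm_of_nonneg (hf_nonneg k x hx)).symm

theorem Real.sin_eq_two_mul_tan_half_mul_cos_half_sq (x : ℝ) :
    sin x = 2 * tan (x / 2) * cos (x / 2) ^ 2 := by
  conv_lhs => rw [← mul_div_cancel₀ x (two_ne_zero' ℝ), sin_two_mul]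
  rw [tan_eq_sin_div_cos]
  rcases eq_or_ne (cos (x / 2)) 0 with hc | hc
  · simp [hc]
  · field_simp

theorem Real.cos_eq_one_sub_tan_half_sq_mul_cos_half_sq {x : ℝ} (hc : cos (x / 2) ≠ 0) :
    cos x = (1 - tan (x / 2) ^ 2) * cos (x / 2) ^ 2 := by
  conv_lhs => rw [← mul_div_cancel₀ x (two_ne_zero' ℝ), cos_two_mul]
  rw [tan_eq_sin_div_cos]
  field_simp
  linarith [sin_sq_add_cos_sq (x / 2)]

theorem Real.hasDerivAt_tan_half {x : ℝ} (hc : cos (x / 2) ≠ 0) :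
    HasDerivAt (fun y => tan (y / 2)) (1 / (2 * cos (x / 2) ^ 2)) x := by
  rw [show 1 / (2 * cos (x / 2) ^ 2) = 1 / cos (x / 2) ^ 2 * (1 / 2) by ring]
  exact (hasDerivAt_tan hc).comp x ((hasDerivAt_id x).div_const 2)

theorem Real.cos_half_pos {x : ℝ} (hx : x ∈ Ioo (-π) π) : 0 < cos (x / 2) :=
  cos_pos_of_mem_Ioo ⟨by linarith [hx.1], by linarith [hx.2]⟩

theorem Real.abs_tan_half_lt_one {x : ℝ} (hx : x ∈ Ioo (-(π / 2)) (π / 2)) :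
    |tan (x / 2)| < 1 := by
  have hx2 : x / 2 ∈ Ioo (-(π / 4)) (π / 4) := ⟨by linarith [hx.1], by linarith [hx.2]⟩
  have hmem : ∀ y, -(π / 4) ≤ y → y ≤ π / 4 → y ∈ Ioo (-(π / 2)) (π / 2) :=
    fun y h₁ h₂ => ⟨by linarith [pi_pos], by linarith [pi_pos]⟩
  have hx2' := hmem _ hx2.1.le hx2.2.le
  rw [abs_lt, ← tan_pi_div_four, ← tan_neg]
  exact ⟨strictMonoOn_tan (hmem _ le_rfl (by linarith [pi_pos])) hx2' hx2.1,
    strictMonoOn_tan hx2' (hmem _ (by linarith [pi_pos]) le_rfl) hx2.2⟩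

theorem Real.integral_one_div_cos {α : ℝ} (hα : α ∈ Ioo (-(π / 2)) (π / 2)) :
    ∫ β in (0 : ℝ)..α, 1 / cos β = log (1 + tan (α / 2)) - log (1 - tan (α / 2)) := by
  have hsub : uIcc 0 α ⊆ Ioo (-(π / 2)) (π / 2) :=
    ordConnected_Ioo.uIcc_subset ⟨by linarith [pi_pos], by linarith [pi_pos]⟩ hα
  have hderiv : ∀ x ∈ uIcc 0 α,
      HasDerivAt (fun y => log (1 + tan (y / 2)) - log (1 - tan (y / 2))) (1 / cos x) x := by
    intro x hx
    have hx := hsub hx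
    have hc : cos (x / 2) ≠ 0 :=
      (cos_half_pos ⟨by linarith [hx.1, pi_pos], by linarith [hx.2, pi_pos]⟩).ne'
    obtain ⟨ht₁, ht₂⟩ := abs_lt.1 (abs_tan_half_lt_one hx)
    have ht := hasDerivAt_tan_half hc
    refine (((ht.const_add 1).log (by linarith)).sub
      ((ht.const_sub 1).log (by linarith))).congr_deriv ?_
    rw [cos_eq_one_sub_tan_half_sq_mul_cos_half_sq hc]
    have h₁ : 1 + tan (x / 2) ≠ 0 := by linarith
    have h₂ : 1 - tan (x / 2) ≠ 0 := by linarith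
    have h₃ : 1 - tan (x / 2) ^ 2 ≠ 0 := by nlinarith
    field_simp
    ring
  have hcont : ContinuousOn (fun β => 1 / cos β) (uIcc 0 α) :=
    continuousOn_const.div continuous_cos.continuousOn fun x hx =>
      (cos_pos_of_mem_Ioo (hsub hx)).ne'
  rw [intervalIntegral.integral_eq_sub_of_hasDerivAt hderiv hcont.intervalIntegrable]
  simp

/-- With `t = tan (α / 2)` this is `2 t ^ (2k+1) / ((2k+1) sin α)`, because
`sin α = 2 t cos² (α / 2)`; an antiderivative is `2 t ^ (2k+1) / (2k+1)²`. -/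
noncomputable def tanHalfSeriesTerm (k : ℕ) (α : ℝ) : ℝ :=
  tan (α / 2) ^ (2 * k) / ((2 * k + 1) * cos (α / 2) ^ 2)

theorem tanHalfSeriesTerm_nonneg (k : ℕ) (α : ℝ) : 0 ≤ tanHalfSeriesTerm k α :=
  div_nonneg ((even_two_mul k).pow_nonneg _) (by positivity)

theorem hasSum_tanHalfSeriesTerm {α : ℝ} (hsin : sin α ≠ 0) (ht : |tan (α / 2)| < 1) :
    HasSum (fun k => tanHalfSeriesTerm k α)
      (1 / sin α * (log (1 + tan (α / 2)) - log (1 - tan (α / 2)))) := by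
  have h_eq : (fun k : ℕ => 1 / sin α * (2 * (1 / (2 * k + 1)) * tan (α / 2) ^ (2 * k + 1))) =
      fun k => tanHalfSeriesTerm k α := by
    ext k
    rw [sin_eq_two_mul_tan_half_mul_cos_half_sq] at hsin ⊢
    have ht0 : tan (α / 2) ≠ 0 := by intro h; simp [h] at hsin
    have hc : cos (α / 2) ≠ 0 := by intro h; simp [h] at hsin
    rw [tanHalfSeriesTerm]
    field_simp
    ring
  rw [← h_eq]
  exact (hasSum_log_sub_log_of_abs_lt_one ht).mul_left _

theorem continuousOn_tanHalfSeriesTerm (k : ℕ) :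
    ContinuousOn (tanHalfSeriesTerm k) (Ioo (-π) π) := fun α hα =>
  have hc := (cos_half_pos hα).ne'
  (((hasDerivAt_tan_half hc).continuousAt.pow _).div (continuousAt_const.mul
    ((continuous_cos.comp (continuous_id.div_const 2)).continuousAt.pow 2))
    (mul_ne_zero (by positivity) (pow_ne_zero 2 hc))).continuousWithinAt

theorem hasDerivAt_tan_half_pow_div (k : ℕ) {α : ℝ} (hc : cos (α / 2) ≠ 0) :
    HasDerivAt (fun y => 2 * tan (y / 2) ^ (2 * k + 1) / (2 * k + 1) ^ 2)
      (tanHalfSeriesTerm k α) α := by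
  refine ((((hasDerivAt_tan_half hc).pow (2 * k + 1)).const_mul 2).div_const _).congr_deriv ?_
  rw [tanHalfSeriesTerm]
  push_cast
  field_simp

theorem Real.uIcc_zero_pi_div_two_subset_Ioo : uIcc 0 (π / 2) ⊆ Ioo (-π) π := by
  rw [uIcc_of_le (by positivity)]
  exact Icc_subset_Ioo (by linarith [pi_pos]) (by linarith [pi_pos])

theorem integral_tanHalfSeriesTerm (k : ℕ) :
    ∫ α in (0 : ℝ)..(π / 2), tanHalfSeriesTerm k α = 2 / (2 * k + 1) ^ 2 := by
  have hsub := uIcc_zero_pi_div_two_subset_Ioo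
  rw [intervalIntegral.integral_eq_sub_of_hasDerivAt
    (fun x hx => hasDerivAt_tan_half_pow_div k (cos_half_pos (hsub hx)).ne')
    ((continuousOn_tanHalfSeriesTerm k).mono hsub).intervalIntegrable,
    show π / 2 / 2 = π / 4 by ring, tan_pi_div_four]
  simp

theorem stmt3 :
    (1/2) * ∫ α in (0:ℝ)..(π/2),
      (1 / Real.sin α) * ∫ β in (0:ℝ)..α, 1 / Real.cos β = π ^ 2 / 8 := by
  have h_series : ∫ α in (0 : ℝ)..(π / 2), 1 / sin α * ∫ β in (0 : ℝ)..α, 1 / cos β =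
      ∫ α in (0 : ℝ)..(π / 2), ∑' k, tanHalfSeriesTerm k α := by
    refine intervalIntegral.integral_congr_Ioo_of_le (by positivity) fun α hα => ?_
    have hα' : α ∈ Ioo (-(π / 2)) (π / 2) := ⟨by linarith [hα.1, pi_pos], hα.2⟩
    rw [integral_one_div_cos hα', (hasSum_tanHalfSeriesTerm
      (sin_pos_of_pos_of_lt_pi hα.1 (by linarith [hα.2, pi_pos])).ne'
      (abs_tan_half_lt_one hα')).tsum_eq]
  have h_termwise : HasSum (fun k : ℕ => ∫ α in (0 : ℝ)..(π / 2), tanHalfSeriesTerm k α)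
      (π ^ 2 / 4) := by
    have h_eq : (fun k : ℕ => 2 * (1 / (2 * k + 1 : ℝ) ^ 2)) =
        fun k : ℕ => ∫ α in (0 : ℝ)..(π / 2), tanHalfSeriesTerm k α := by
      ext k
      rw [integral_tanHalfSeriesTerm, mul_one_div]
    rw [← h_eq, show π ^ 2 / 4 = 2 * (π ^ 2 / 8) by ring]
    exact hasSum_one_div_odd_sq.mul_left 2
  have h_exchange := intervalIntegral.hasSum_integral_of_nonneg (by positivity)
    (fun k => ((continuousOn_tanHalfSeriesTerm k).mono
      uIcc_zero_pi_div_two_subset_Ioo).intervalIntegrable)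
    (fun k x _ => tanHalfSeriesTerm_nonneg k x) h_termwise.summable
  rw [h_series, h_exchange.unique h_termwise]
  ring
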